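/- A geodesic triangle on the unit 2-sphere with all three angles at most π/2 is contained in a closed octant of the sphere. -/

import Mathlib

/-- The minimizing great-circle arc between two (non-antipodal) unit vectors `a, b`:
the unit vectors that are nonnegative linear combinations of `a` and `b`. -/
def sphArc (a b : EuclideanSpace ℝ (Fin 3)) : Set (EuclideanSpace ℝ (Fin 3)) :=
  {x | ‖x‖ = 1 ∧ ∃ s t : ℝ, 0 ≤ s ∧ 0 ≤ t ∧ x = s • a + t • b}

/-- The spherical angle of the geodesic triangle `a b c` on the unit sphere at the
vertex `a`. -/
noncomputable def sphAngle (a b c : EuclideanSpace ℝ (Fin 3)) : ℝ :=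
  InnerProductGeometry.angle (b - (inner ℝ b a : ℝ) • a) (c - (inner ℝ c a : ℝ) • a)

/-! The angle condition at a vertex `a` reads `⟪a, b⟫ * ⟪a, c⟫ ≤ ⟪b, c⟫`. The three such
inequalities, together with `⟪u, v⟫ < 1` for distinct unit vertices, force the pairwise inner
products to be nonnegative. Gram–Schmidt applied to `a, b, c` then yields an orthonormal basis in
which the coordinate matrix of `a, b, c` is upper triangular with nonnegative diagonal; its
remaining entries are `⟪a, b⟫`, `⟪a, c⟫` and a nonnegative multiple of `⟪b, c⟫ - ⟪a, b⟫ * ⟪a, c⟫`.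
Each point of a side is a nonnegative combination of two vertices. -/

open InnerProductSpace InnerProductGeometry Module

section GramSchmidt

variable {𝕜 E : Type*} [RCLike 𝕜] [NormedAddCommGroup E] [InnerProductSpace 𝕜 E]

theorem gramSchmidt_fin_one {n : ℕ} (f : Fin (n + 2) → E) :
    gramSchmidt 𝕜 f 1 = f 1 - (inner 𝕜 (f 0) (f 1) / ((‖f 0‖ ^ 2 : ℝ) : 𝕜)) • f 0 := by
  have hIio : Finset.Iio (1 : Fin (n + 2)) = {0} := by ext i; simp [Fin.lt_one_iff]
  have h0 : gramSchmidt 𝕜 f 0 = f 0 := gramSchmidt_bot 𝕜 f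
  rw [gramSchmidt_def, hIio, Finset.sum_singleton, h0, Submodule.starProjection_singleton]

theorem inner_gramSchmidt_self {ι : Type*} [LinearOrder ι] [LocallyFiniteOrderBot ι]
    [WellFoundedLT ι] (f : ι → E) (n : ι) :
    inner 𝕜 (gramSchmidt 𝕜 f n) (f n) = (‖gramSchmidt 𝕜 f n‖ : 𝕜) ^ 2 := by
  conv_lhs => rw [gramSchmidt_def'' 𝕜 f n]
  rw [inner_add_right, inner_self_eq_norm_sq_to_K, inner_sum, add_eq_left]
  refine Finset.sum_eq_zero fun i hi => ?_
  rw [inner_smul_right, gramSchmidt_orthogonal 𝕜 f (Finset.mem_Iio.1 hi).ne', mul_zero]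

end GramSchmidt

section GramSchmidtReal

variable {E ι : Type*} [NormedAddCommGroup E] [InnerProductSpace ℝ E] [FiniteDimensional ℝ E]
  [LinearOrder ι] [LocallyFiniteOrderBot ι] [WellFoundedLT ι] [Fintype ι]
  (h : finrank ℝ E = Fintype.card ι) (f : ι → E)

theorem inner_gramSchmidtOrthonormalBasis_nonneg {i j : ι}
    (hij : 0 ≤ inner ℝ (gramSchmidt ℝ f i) (f j)) :
    0 ≤ inner ℝ (gramSchmidtOrthonormalBasis h f i) (f j) := by
  by_cases hi : gramSchmidtNormed ℝ f i = 0
  · rw [inner_gramSchmidtOrthonormalBasis_eq_zero h hi]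
  · rw [gramSchmidtOrthonormalBasis_apply h hi, gramSchmidtNormed, real_inner_smul_left]
    positivity

theorem inner_gramSchmidtOrthonormalBasis_self_nonneg (i : ι) :
    0 ≤ inner ℝ (gramSchmidtOrthonormalBasis h f i) (f i) :=
  inner_gramSchmidtOrthonormalBasis_nonneg h f (by rw [inner_gramSchmidt_self]; positivity)

end GramSchmidtReal

theorem exists_orthonormalBasis_inner_nonneg {E : Type*} [NormedAddCommGroup E]
    [InnerProductSpace ℝ E] (hE : finrank ℝ E = 3) {a b c : E} (ha : ‖a‖ = 1)
    (hab : 0 ≤ inner ℝ a b) (hac : 0 ≤ inner ℝ a c)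
    (hbc : inner ℝ a b * inner ℝ a c ≤ inner ℝ b c) :
    ∃ B : OrthonormalBasis (Fin 3) ℝ E,
      ∀ i, 0 ≤ inner ℝ (B i) a ∧ 0 ≤ inner ℝ (B i) b ∧ 0 ≤ inner ℝ (B i) c := by
  have : FiniteDimensional ℝ E := Module.finite_of_finrank_eq_succ hE
  set f : Fin 3 → E := ![a, b, c]
  have hE' : finrank ℝ E = Fintype.card (Fin 3) := by simpa using hE
  have h0 : gramSchmidt ℝ f 0 = a := gramSchmidt_bot ℝ f
  have h1 : inner ℝ (gramSchmidt ℝ f 1) c = inner ℝ b c - inner ℝ a b * inner ℝ a c := by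
    simp [f, gramSchmidt_fin_one, ha, inner_sub_left, real_inner_smul_left]
  have hoff : ∀ i j : Fin 3, i < j → 0 ≤ inner ℝ (gramSchmidt ℝ f i) (f j) := by
    intro i j hij
    fin_cases i <;> fin_cases j <;> simp_all [f]
  set B := gramSchmidtOrthonormalBasis hE' f
  have hB : ∀ i j, 0 ≤ inner ℝ (B i) (f j) := by
    intro i j
    rcases lt_trichotomy j i with hji | rfl | hij
    · exact (gramSchmidtOrthonormalBasis_inv_triangular hE' f hji).ge
    · exact inner_gramSchmidtOrthonormalBasis_self_nonneg hE' f j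
    · exact inner_gramSchmidtOrthonormalBasis_nonneg hE' f (hoff i j hij)
  exact ⟨B, fun i => ⟨hB i 0, hB i 1, hB i 2⟩⟩

theorem nonneg_of_mul_le_of_lt_one {R : Type*} [CommRing R] [LinearOrder R]
    [IsStrictOrderedRing R] {x y z : R} (hx : x < 1) (hy : y < 1) (hz : z < 1)
    (hxy : x * y ≤ z) (hxz : x * z ≤ y) (hyz : y * z ≤ x) :
    0 ≤ x ∧ 0 ≤ y ∧ 0 ≤ z := by
  -- `(x + y) * (1 - z) = (x - y * z) + (y - x * z)`, and similarly for the other pairs; so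
  -- e.g. `x < 0` forces `y, z > 0`, contradicting `y * z ≤ x`.
  have hx_y : 0 ≤ x + y := by nlinarith
  have hx_z : 0 ≤ x + z := by nlinarith
  have hy_z : 0 ≤ y + z := by nlinarith
  refine ⟨?_, ?_, ?_⟩ <;> by_contra! hneg
  · nlinarith
  · nlinarith
  · nlinarith

theorem inner_nonneg_of_angle_le_pi_div_two {V : Type*} [NormedAddCommGroup V]
    [InnerProductSpace ℝ V] {x y : V} (h : angle x y ≤ Real.pi / 2) : 0 ≤ inner ℝ x y := by
  rw [← cos_angle_mul_norm_mul_norm]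
  have hcos : 0 ≤ Real.cos (angle x y) :=
    Real.cos_nonneg_of_neg_pi_div_two_le_of_le (by linarith [angle_nonneg x y, Real.pi_pos]) h
  positivity

theorem inner_mul_inner_le_of_sphAngle_le_pi_div_two {a b c : EuclideanSpace ℝ (Fin 3)}
    (ha : ‖a‖ = 1) (h : sphAngle a b c ≤ Real.pi / 2) :
    inner ℝ a b * inner ℝ a c ≤ inner ℝ b c := by
  have hcos := inner_nonneg_of_angle_le_pi_div_two h
  simp only [inner_sub_left, inner_sub_right, real_inner_smul_left, real_inner_smul_right,
    real_inner_self_eq_norm_sq, ha, real_inner_comm a] at hcos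
  linarith

theorem inner_nonneg_of_mem_sphArc {v a b x : EuclideanSpace ℝ (Fin 3)}
    (ha : 0 ≤ inner ℝ v a) (hb : 0 ≤ inner ℝ v b) (hx : x ∈ sphArc a b) :
    0 ≤ inner ℝ v x := by
  obtain ⟨-, s, t, hs, ht, rfl⟩ := hx
  rw [inner_add_right, real_inner_smul_right, real_inner_smul_right]
  positivity

theorem stmt13_general (a b c : EuclideanSpace ℝ (Fin 3))
    (ha : ‖a‖ = 1) (hb : ‖b‖ = 1) (hc : ‖c‖ = 1)
    (hab : a ≠ b) (hbc : b ≠ c) (hac : a ≠ c)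
    (hA : sphAngle a b c ≤ Real.pi / 2)
    (hB : sphAngle b a c ≤ Real.pi / 2)
    (hC : sphAngle c a b ≤ Real.pi / 2) :
    ∃ B : OrthonormalBasis (Fin 3) ℝ (EuclideanSpace ℝ (Fin 3)),
      ∀ x ∈ sphArc a b ∪ sphArc b c ∪ sphArc a c, ∀ i, 0 ≤ (inner ℝ (B i) x : ℝ) := by
  have hA' := inner_mul_inner_le_of_sphAngle_le_pi_div_two ha hA
  have hB' := inner_mul_inner_le_of_sphAngle_le_pi_div_two hb hB
  have hC' := inner_mul_inner_le_of_sphAngle_le_pi_div_two hc hC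
  rw [real_inner_comm a b] at hB'
  rw [real_inner_comm a c, real_inner_comm b c] at hC'
  obtain ⟨hab₀, hac₀, -⟩ := nonneg_of_mul_le_of_lt_one
    ((inner_lt_one_iff_real_of_norm_eq_one ha hb).2 hab)
    ((inner_lt_one_iff_real_of_norm_eq_one ha hc).2 hac)
    ((inner_lt_one_iff_real_of_norm_eq_one hb hc).2 hbc) hA' hB' hC'
  obtain ⟨B, hB⟩ :=
    exists_orthonormalBasis_inner_nonneg finrank_euclideanSpace_fin ha hab₀ hac₀ hA'
  refine ⟨B, fun x hx i => ?_⟩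
  obtain ⟨hBa, hBb, hBc⟩ := hB i
  rcases hx with (hx | hx) | hx
  · exact inner_nonneg_of_mem_sphArc hBa hBb hx
  · exact inner_nonneg_of_mem_sphArc hBb hBc hx
  · exact inner_nonneg_of_mem_sphArc hBa hBc hx

/-- A geodesic triangle on the unit 2-sphere with all three angles at most `π/2` is
contained in a closed octant: there is an orthonormal basis with respect to which
every point of the three sides has nonnegative coordinates. -/
theorem stmt13 (a b c : EuclideanSpace ℝ (Fin 3))
    (ha : ‖a‖ = 1) (hb : ‖b‖ = 1) (hc : ‖c‖ = 1)
    (hab : a ≠ b) (hbc : b ≠ c) (hac : a ≠ c)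
    (hab' : a ≠ -b) (hbc' : b ≠ -c) (hac' : a ≠ -c)
    (hA : sphAngle a b c ≤ Real.pi / 2)
    (hB : sphAngle b a c ≤ Real.pi / 2)
    (hC : sphAngle c a b ≤ Real.pi / 2) :
    ∃ B : OrthonormalBasis (Fin 3) ℝ (EuclideanSpace ℝ (Fin 3)),
      ∀ x ∈ sphArc a b ∪ sphArc b c ∪ sphArc a c, ∀ i, 0 ≤ (inner ℝ (B i) x : ℝ) :=
  stmt13_general a b c ha hb hc hab hbc hac hA hB hC
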